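/- For 0 ≤ σ₁ < σ/2 < σ₂ ≤ σ there exist ε* > 0 and constants 0 < c ≤ C such that for all r ≥ 1/ε*: c r^{2(σ-σ₂)} ≤ -λ₁(r) ≤ C r^{2(σ-σ₂)}, c r^{2σ₂} ≤ -λ₂(r) ≤ C r^{2σ₂}, and c r^{2σ₂} ≤ λ₁(r) − λ₂(r) ≤ C r^{2σ₂}, with λ_{1,2}(r) = ½(−r^{2σ₁} − r^{2σ₂} ± √((r^{2σ₁}+r^{2σ₂})² − 4 r^{2σ})). -/
import Mathlib
set_option maxHeartbeats 1000000


open Real Set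

/-- The characteristic roots `λ₁ ≥ λ₂` (for real discriminant). -/
noncomputable def lamPlus (σ σ₁ σ₂ r : ℝ) : ℝ :=
  (-(r ^ (2*σ₁)) - r ^ (2*σ₂) + Real.sqrt ((r ^ (2*σ₁) + r ^ (2*σ₂))^2 - 4 * r ^ (2*σ))) / 2

noncomputable def lamMinus (σ σ₁ σ₂ r : ℝ) : ℝ :=
  (-(r ^ (2*σ₁)) - r ^ (2*σ₂) - Real.sqrt ((r ^ (2*σ₁) + r ^ (2*σ₂))^2 - 4 * r ^ (2*σ))) / 2

lemma key_alg (a b p S : ℝ) (ha : 0 < a) (hb : 0 < b) (hp : 0 < p)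
    (hab : 2*a ≤ b) (hpb : 8*p ≤ b^2) (hS0 : 0 ≤ S) (hS2 : S^2 = (a+b)^2 - 4*p) :
    b ≤ 2*S ∧ 2*S ≤ 3*b ∧ p ≤ b*(a+b-S) ∧ b*(a+b-S) ≤ 4*p := by
  have h1 : b ≤ 2*S := by nlinarith [sq_nonneg (2*S - b), sq_nonneg (2*S + b)]
  have h2 : 2*S ≤ 3*b := by nlinarith [sq_nonneg (2*S - 3*b), sq_nonneg (2*S + 3*b)]
  have hSab : S ≤ a + b := by nlinarith [sq_nonneg (S - (a+b)), sq_nonneg (S + (a+b))]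
  refine ⟨h1, h2, ?_, ?_⟩
  · nlinarith
  · nlinarith

lemma rpow_factor_ge {r k δ : ℝ} (hk : 1 ≤ k) (hδ : 0 < δ) (hr : k ^ (1/δ) ≤ r) :
    k ≤ r ^ δ := by
  have hk0 : (0:ℝ) ≤ k := by linarith
  have h0 : (0:ℝ) ≤ k ^ (1/δ) := Real.rpow_nonneg hk0 _
  calc k = (k ^ (1/δ)) ^ δ := by
        rw [← Real.rpow_mul hk0, one_div_mul_cancel hδ.ne', Real.rpow_one]
    _ ≤ r ^ δ := Real.rpow_le_rpow h0 hr hδ.le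

theorem stmt14 (σ σ₁ σ₂ : ℝ) (hσ : 1 ≤ σ) (hσ₁ : 0 ≤ σ₁) (h12 : σ₁ < σ / 2)
    (h22 : σ / 2 < σ₂) (h2σ : σ₂ ≤ σ) :
    ∃ εs > 0, ∃ c > 0, ∃ C : ℝ, c ≤ C ∧ ∀ r ≥ 1/εs,
      (c * r ^ (2*(σ-σ₂)) ≤ -lamPlus σ σ₁ σ₂ r ∧ -lamPlus σ σ₁ σ₂ r ≤ C * r ^ (2*(σ-σ₂))) ∧
      (c * r ^ (2*σ₂) ≤ -lamMinus σ σ₁ σ₂ r ∧ -lamMinus σ σ₁ σ₂ r ≤ C * r ^ (2*σ₂)) ∧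
      (c * r ^ (2*σ₂) ≤ lamPlus σ σ₁ σ₂ r - lamMinus σ σ₁ σ₂ r ∧
        lamPlus σ σ₁ σ₂ r - lamMinus σ σ₁ σ₂ r ≤ C * r ^ (2*σ₂)) := by
  set δ : ℝ := 2*(σ₂ - σ₁) with hδdef
  set δ' : ℝ := 4*σ₂ - 2*σ with hδ'def
  have hδ : 0 < δ := by simp only [hδdef]; linarith
  have hδ' : 0 < δ' := by simp only [hδ'def]; linarith
  set R : ℝ := max 1 (max ((2:ℝ) ^ (1/δ)) ((8:ℝ) ^ (1/δ'))) with hRdef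
  have hR1 : (1:ℝ) ≤ R := le_max_left _ _
  have hR0 : (0:ℝ) < R := by linarith
  refine ⟨1/R, by positivity, 1/2, by norm_num, 2, by norm_num, ?_⟩
  intro r hr
  rw [one_div_one_div] at hr
  have hr1 : (1:ℝ) ≤ r := le_trans hR1 hr
  have hr0 : (0:ℝ) < r := by linarith
  set a : ℝ := r ^ (2*σ₁) with hadef
  set b : ℝ := r ^ (2*σ₂) with hbdef
  set p : ℝ := r ^ (2*σ) with hpdef
  have ha : 0 < a := Real.rpow_pos_of_pos hr0 _
  have hb : 0 < b := Real.rpow_pos_of_pos hr0 _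
  have hp : 0 < p := Real.rpow_pos_of_pos hr0 _
  -- 2a ≤ b
  have hδr : (2:ℝ) ≤ r ^ δ :=
    rpow_factor_ge (by norm_num) hδ (le_trans (le_max_of_le_right (le_max_left _ _)) hr)
  have hδ'r : (8:ℝ) ≤ r ^ δ' :=
    rpow_factor_ge (by norm_num) hδ' (le_trans (le_max_of_le_right (le_max_right _ _)) hr)
  have hba : b = a * r ^ δ := by
    rw [hadef, hbdef, hδdef, ← Real.rpow_add hr0]; ring_nf
  have hab : 2*a ≤ b := by
    rw [hba]; nlinarith
  have hb2 : b^2 = p * r ^ δ' := by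
    rw [hpdef, hbdef, hδ'def, ← Real.rpow_add hr0, sq, ← Real.rpow_add hr0]; ring_nf
  have hpb : 8*p ≤ b^2 := by
    rw [hb2]; nlinarith
  -- discriminant
  set S : ℝ := Real.sqrt ((a + b)^2 - 4*p) with hSdef
  have hD0 : 0 ≤ (a + b)^2 - 4*p := by nlinarith
  have hS0 : 0 ≤ S := Real.sqrt_nonneg _
  have hS2 : S^2 = (a+b)^2 - 4*p := Real.sq_sqrt hD0
  obtain ⟨h1, h2, h3, h4⟩ := key_alg a b p S ha hb hp hab hpb hS0 hS2
  -- rewrite the lambdas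
  have hLp : lamPlus σ σ₁ σ₂ r = (-a - b + S) / 2 := by
    unfold lamPlus
    rw [← hadef, ← hbdef, ← hpdef, ← hSdef]
  have hLm : lamMinus σ σ₁ σ₂ r = (-a - b - S) / 2 := by
    unfold lamMinus
    rw [← hadef, ← hbdef, ← hpdef, ← hSdef]
  have hexp : r ^ (2*(σ - σ₂)) = p / b := by
    rw [hpdef, hbdef, ← Real.rpow_sub hr0]; ring_nf
  rw [hLp, hLm, hexp]
  have hpbdiv1 : p / b ≤ a + b - S := by
    rw [div_le_iff₀ hb, mul_comm]; exact h3
  have hpbdiv2 : a + b - S ≤ 4 * (p / b) := by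
    rw [mul_div_assoc', le_div_iff₀ hb, mul_comm]; exact h4
  constructor
  · constructor <;> [linarith; linarith]
  constructor
  · constructor <;> [linarith; linarith]
  · constructor <;> [linarith; linarith]
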